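/- arXiv:1611.08870 — 2 statements merged into one kernel-verified Lean document; each statement's English description precedes it below -/
import Mathlib

section
/- If X ⊆ R_S and R_S \ X is at most countable, then the subspace X has a π-tree H such that cofin({2n+1 : n ∈ ω}) ≫ Rise_H(X). -/
open Set

universe u v

/-- A family `γ` π-refines `δ`: every nonempty member of `δ` contains a
nonempty member of `γ`. -/
def PiRefines {α : Type*} (γ δ : Set (Set α)) : Prop :=
  ∀ D ∈ δ, D.Nonempty → ∃ G ∈ γ, G.Nonempty ∧ G ⊆ D

/-- The finite intersection property. -/
def HasFIP {α : Type*} (γ : Set (Set α)) : Prop :=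
  ∀ δ : Set (Set α), δ ⊆ γ → δ.Finite → δ.Nonempty → (⋂₀ δ).Nonempty

/-- `cofin A` is the family of complements in `A` of finite subsets of `A`. -/
def cofin (A : Set ℕ) : Set (Set ℕ) :=
  {B | ∃ C : Set ℕ, C.Finite ∧ C ⊆ A ∧ B = A \ C}

/-- A foliage tree on `X`: a set-theoretic tree (strict partial order with
well-ordered sets of strict predecessors) with a leaf (a subset of `X`)
attached to each node. -/
structure FoliageTree (X : Type u) where
  Node : Type
  lt : Node → Node → Prop
  lt_irrefl : ∀ a, ¬ lt a a
  lt_trans : ∀ {a b c}, lt a b → lt b c → lt a c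
  wellOrdered : ∀ a : Node, IsWellOrder {b : Node // lt b a} fun x y => lt x.1 y.1
  leaf : Node → Set X

/-- Strict proper-extension order on finite sequences of naturals. -/
def seqLT (a b : List ℕ) : Prop := a <+: b ∧ a ≠ b

namespace FoliageTree

variable {X : Type u}

/-- The sons (immediate successors) of a node. -/
def Sons (F : FoliageTree X) (x : F.Node) : Set F.Node :=
  {s | F.lt x s ∧ ¬ ∃ t, F.lt x t ∧ F.lt t s}

/-- A node is maximal if it has no strict successor. -/
def IsMaxNode (F : FoliageTree X) (x : F.Node) : Prop := ¬ ∃ s, F.lt x s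

/-- A chain of nodes. -/
def IsChainN (F : FoliageTree X) (C : Set F.Node) : Prop :=
  ∀ x ∈ C, ∀ y ∈ C, F.lt x y ∨ x = y ∨ F.lt y x

/-- A branch is a maximal chain. -/
def IsBranch (F : FoliageTree X) (B : Set F.Node) : Prop :=
  F.IsChainN B ∧ ∀ C, F.IsChainN C → B ⊆ C → B = C

/-- The height of a node: the order type of its set of strict predecessors. -/
noncomputable def height (F : FoliageTree X) (v : F.Node) : Ordinal :=
  @Ordinal.type {b : F.Node // F.lt b v} (fun x y => F.lt x.1 y.1) (F.wellOrdered v)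

/-- `shoot F v`: unions of leaves over cofinite sets of sons of `v`. -/
def shoot (F : FoliageTree X) (v : F.Node) : Set (Set X) :=
  {S | ∃ C : Set F.Node, C ⊆ F.Sons v ∧ (F.Sons v \ C).Finite ∧ S = ⋃ s ∈ C, F.leaf s}

/-- `scope F p`: the nodes whose leaf contains `p`. -/
def scope (F : FoliageTree X) (p : X) : Set F.Node := {x | p ∈ F.leaf x}

/-- The union of all leaves. -/
def flesh (F : FoliageTree X) : Set X := ⋃ x, F.leaf x

/-- `F` is a foliage `ω,ω`-tree: its skeleton is order-isomorphic to
`(ω^{<ω}, ⊂)`. -/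
def IsOmegaOmegaTree (F : FoliageTree X) : Prop := Nonempty (F.lt ≃r seqLT)

/-- `F` is locally strict: the leaf of every non-maximal node is the disjoint
union of the leaves of its sons. -/
def LocallyStrict (F : FoliageTree X) : Prop :=
  ∀ x, ¬ F.IsMaxNode x →
    F.leaf x = (⋃ s ∈ F.Sons x, F.leaf s) ∧
      ∀ s ∈ F.Sons x, ∀ t ∈ F.Sons x, s ≠ t → Disjoint (F.leaf s) (F.leaf t)

/-- `F` has strict branches: it has nodes, and along every branch the
intersection of the leaves is a singleton. -/
def StrictBranches (F : FoliageTree X) : Prop :=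
  Nonempty F.Node ∧ ∀ B, F.IsBranch B → ∃ p, (⋂ x ∈ B, F.leaf x) = {p}

/-- `r` is the root: the least node. -/
def IsRoot (F : FoliageTree X) (r : F.Node) : Prop := ∀ x, r = x ∨ F.lt r x

/-- All leaves are open. -/
def OpenIn [TopologicalSpace X] (F : FoliageTree X) : Prop := ∀ x, IsOpen (F.leaf x)

/-- `F` is a Baire foliage tree on `X`. -/
def IsBaireFoliageTree [TopologicalSpace X] (F : FoliageTree X) : Prop :=
  F.OpenIn ∧ F.LocallyStrict ∧ F.IsOmegaOmegaTree ∧ F.StrictBranches ∧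
    ∃ r, F.IsRoot r ∧ F.leaf r = Set.univ

/-- `F` grows into `X`. -/
def GrowsInto [TopologicalSpace X] (F : FoliageTree X) : Prop :=
  ∀ p : X, ∀ U ∈ nhds p, ∃ z ∈ F.scope p, PiRefines (F.shoot z) {U}

/-- `F` is a π-tree on `X`. -/
def IsPiTree [TopologicalSpace X] (F : FoliageTree X) : Prop :=
  F.IsBaireFoliageTree ∧ F.GrowsInto

/-- `rise F p U`: the set of (finite) heights of nodes `v` whose leaf contains
`p` and whose shoot π-refines `{U}`. -/
noncomputable def rise (F : FoliageTree X) (p : X) (U : Set X) : Set ℕ :=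
  {n | ∃ v ∈ F.scope p, PiRefines (F.shoot v) {U} ∧ F.height v = (n : Ordinal)}

/-- `Rise F`: all sets `rise F p U` for `p ∈ X` and `U` a neighbourhood of `p`. -/
def Rise [TopologicalSpace X] (F : FoliageTree X) : Set (Set ℕ) :=
  {R | ∃ p U, U ∈ nhds p ∧ R = F.rise p U}

end FoliageTree

/-- The Sorgenfrey line: the reals with the topology generated by the
half-open intervals `[a, b)`. -/
def SorgLine : Type := ℝ

instance : TopologicalSpace SorgLine :=
  TopologicalSpace.generateFrom {s : Set ℝ | ∃ a b : ℝ, s = Set.Ico a b}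


/-!
Every leaf is the trace on `X` of a half-open interval `[a, b)`, and the sons of a node cut its
interval into countably many half-open intervals whose end points lie in `X` (which is dense).
If `a ∈ X` the cut points `a < m < c₂ < c₃ < ⋯` increase to `b`, so every cofinite union of sons
lies in `(p, b) ⊆ [p, p + ε)` as soon as `p ∈ [a, b)` and `b - a ≤ ε`; if `a ∉ X` the cut points
accumulate at both ends. Below nodes of even length all cut points lie in `X`, so the nodes of
odd height are of the first kind: this gives `cofin (odd) ≫ Rise`. The intervals shrink
geometrically, so along a branch the left ends increase to a point `L` lying in all cells. If
`L ∉ X` then `L = q k` for an enumeration `q` of `ℝ \ X`; at depth `2k + 1` the point `q k` is made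
a cut point, so `L` becomes a left end on the branch and hence a left end at some odd height,
i.e. a point of `X`.
-/

open Filter Topology

theorem seqLT_iff_length_lt {a b : List ℕ} : seqLT a b ↔ a <+: b ∧ a.length < b.length :=
  ⟨fun h => ⟨h.1, h.1.length_le.lt_of_ne fun e => h.2 (h.1.eq_of_length e)⟩,
    fun h => ⟨h.1, by rintro rfl; exact h.2.false⟩⟩

theorem seqLT_iff_of_prefix {a b c : List ℕ} (ha : a <+: c) (hb : b <+: c) :
    seqLT a b ↔ a.length < b.length :=
  seqLT_iff_length_lt.trans
    ⟨And.right, fun h => ⟨List.prefix_of_prefix_length_le ha hb h.le, h⟩⟩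

theorem seqLT_trichotomous_iff {a b : List ℕ} :
    (seqLT a b ∨ a = b ∨ seqLT b a) ↔ a <+: b ∨ b <+: a := by
  constructor
  · rintro (h | rfl | h)
    exacts [Or.inl h.1, Or.inl (List.prefix_refl a), Or.inr h.1]
  · rintro (h | h)
    · exact (eq_or_ne a b).elim (Or.inr ∘ Or.inl) (Or.inl ⟨h, ·⟩)
    · exact (eq_or_ne a b).elim (Or.inr ∘ Or.inl) (fun hne => Or.inr (Or.inr ⟨h, hne.symm⟩))

def seqPredIsoFin (a : List ℕ) :
    (fun x y : {b // seqLT b a} => seqLT x.1 y.1) ≃r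
      ((· < ·) : Fin a.length → Fin a.length → Prop) where
  toFun x := ⟨x.1.length, (seqLT_iff_length_lt.1 x.2).2⟩
  invFun k := ⟨a.take k, seqLT_iff_length_lt.2 ⟨List.take_prefix _ _, by simp⟩⟩
  left_inv x := Subtype.ext (List.prefix_iff_eq_take.1 x.2.1).symm
  right_inv k := Fin.ext (by simp [k.2.le])
  map_rel_iff' {x y} := (seqLT_iff_of_prefix x.2.1 y.2.1).symm

namespace FoliageTree

variable {Y : Type u}

def seqTree (L : List ℕ → Set Y) : FoliageTree Y where
  Node := List ℕ
  lt := seqLT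
  lt_irrefl _ h := h.2 rfl
  lt_trans h₁ h₂ := seqLT_iff_length_lt.2
    ⟨h₁.1.trans h₂.1, (seqLT_iff_length_lt.1 h₁).2.trans (seqLT_iff_length_lt.1 h₂).2⟩
  wellOrdered a := (seqPredIsoFin a).toRelEmbedding.isWellOrder
  leaf := L

variable (L : List ℕ → Set Y)

theorem isOmegaOmegaTree_seqTree : (seqTree L).IsOmegaOmegaTree := ⟨RelIso.refl _⟩

theorem isRoot_seqTree : (seqTree L).IsRoot [] := fun x =>
  (eq_or_ne [] x).imp id fun h => ⟨List.nil_prefix, h⟩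

theorem height_seqTree (u : List ℕ) : (seqTree L).height u = u.length := by
  have := (seqPredIsoFin u).toRelEmbedding.isWellOrder
  exact (Ordinal.type_eq.2 ⟨seqPredIsoFin u⟩).trans (Ordinal.type_fin _)

theorem mem_sons_seqTree {u v : List ℕ} : v ∈ (seqTree L).Sons u ↔ ∃ i, v = u ++ [i] := by
  constructor
  · rintro ⟨huv, hmin⟩
    obtain ⟨hpre, hlt⟩ := seqLT_iff_length_lt.1 huv
    have hlen : v.length = u.length + 1 := by
      by_contra hne
      refine hmin ⟨v.take (u.length + 1), ?_, ?_⟩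
      · refine seqLT_iff_length_lt.2 ⟨?_, by simp; omega⟩
        exact List.prefix_of_prefix_length_le hpre (List.take_prefix _ _) (by simp; omega)
      · exact seqLT_iff_length_lt.2 ⟨List.take_prefix _ _, by simp; omega⟩
    obtain ⟨r, rfl⟩ := hpre
    obtain ⟨i, rfl⟩ := List.length_eq_one_iff.1 (by simpa using hlen)
    exact ⟨i, rfl⟩
  · rintro ⟨i, rfl⟩
    refine ⟨seqLT_iff_length_lt.2 ⟨List.prefix_append _ _, by simp⟩, ?_⟩
    rintro ⟨t, hut, htv⟩
    have := (seqLT_iff_length_lt.1 hut).2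
    have := (seqLT_iff_length_lt.1 htv).2
    simp at *
    omega

section Branch

variable {L} {B : Set (List ℕ)} (hB : (seqTree L).IsBranch B)
include hB

theorem prefix_or_prefix_of_isBranch {x y : List ℕ} (hx : x ∈ B) (hy : y ∈ B) :
    x <+: y ∨ y <+: x :=
  seqLT_trichotomous_iff.1 (hB.1 x hx y hy)

theorem mem_of_isBranch_of_comparable {w : List ℕ} (hw : ∀ y ∈ B, w <+: y ∨ y <+: w) : w ∈ B := by
  have hins : (seqTree L).IsChainN (insert w B) := by
    rintro x (rfl | hx) y (rfl | hy) <;> apply seqLT_trichotomous_iff.2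
    exacts [Or.inl (List.prefix_refl _), hw y hy, (hw x hx).symm,
      prefix_or_prefix_of_isBranch hB hx hy]
  exact (hB.2 _ hins (subset_insert w B)).symm ▸ mem_insert w B

theorem prefix_mem_of_isBranch {v w : List ℕ} (hv : v ∈ B) (hwv : w <+: v) : w ∈ B :=
  mem_of_isBranch_of_comparable hB fun _ hy => (prefix_or_prefix_of_isBranch hB hv hy).elim
    (fun hvy => Or.inl (hwv.trans hvy)) (fun hyv => List.prefix_or_prefix_of_prefix hwv hyv)

theorem exists_length_eq_of_isBranch (n : ℕ) : ∃ v ∈ B, v.length = n := by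
  have exists_longer : ∀ v ∈ B, ∃ w ∈ B, v.length < w.length := by
    intro v hv
    by_contra! hle
    have hvB : v ++ [0] ∈ B := mem_of_isBranch_of_comparable hB fun y hy =>
      Or.inr ((prefix_or_prefix_of_isBranch hB hv hy).elim
        (fun hvy => (hvy.eq_of_length_le (hle y hy)).symm ▸ List.prefix_append v [0])
        (fun hyv => hyv.trans (List.prefix_append v [0])))
    simpa using hle _ hvB
  have exists_ge : ∃ v ∈ B, n ≤ v.length := by
    induction n with
    | zero => exact ⟨[], mem_of_isBranch_of_comparable hB fun _ _ => Or.inl List.nil_prefix, le_rfl⟩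
    | succ n ih =>
      obtain ⟨v, hv, hnv⟩ := ih
      obtain ⟨w, hw, hvw⟩ := exists_longer v hv
      exact ⟨w, hw, by omega⟩
  obtain ⟨v, hv, hnv⟩ := exists_ge
  exact ⟨v.take n, prefix_mem_of_isBranch hB hv (List.take_prefix _ _), by simpa using hnv⟩

theorem exists_eq_range_of_isBranch :
    ∃ u : ℕ → List ℕ, B = range u ∧ ∀ n, (u n).length = n ∧ ∃ i, u (n + 1) = u n ++ [i] := by
  choose u huB hulen using exists_length_eq_of_isBranch hB
  have eq_u : ∀ v ∈ B, v = u v.length := fun v hv =>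
    (prefix_or_prefix_of_isBranch hB hv (huB _)).elim (fun h => h.eq_of_length (hulen _).symm)
      (fun h => (h.eq_of_length (hulen _)).symm)
  refine ⟨u, Subset.antisymm (fun v hv => ⟨v.length, (eq_u v hv).symm⟩)
    (range_subset_iff.2 huB), fun n => ⟨hulen n, ?_⟩⟩
  obtain ⟨r, hr⟩ := (prefix_or_prefix_of_isBranch hB (huB n) (huB (n + 1))).resolve_right
    fun h => by simpa [hulen] using h.length_le
  have hr1 : r.length = 1 := by simpa [← hr, hulen] using hulen (n + 1)
  obtain ⟨i, rfl⟩ := List.length_eq_one_iff.1 hr1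
  exact ⟨i, hr.symm⟩

end Branch

theorem locallyStrict_seqTree (hcover : ∀ u, L u = ⋃ i, L (u ++ [i]))
    (hdisj : ∀ u, Pairwise fun i j => Disjoint (L (u ++ [i])) (L (u ++ [j]))) :
    (seqTree L).LocallyStrict := by
  refine fun (u : List ℕ) _ => ⟨?_, fun s hs t ht hst => ?_⟩
  · change L u = ⋃ s ∈ (seqTree L).Sons u, L s
    ext x
    simp only [hcover u, mem_iUnion, exists_prop]
    refine ⟨fun ⟨i, hi⟩ => ⟨u ++ [i], (mem_sons_seqTree L).2 ⟨i, rfl⟩, hi⟩, fun ⟨s, hs, hx⟩ => ?_⟩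
    obtain ⟨i, rfl⟩ := (mem_sons_seqTree L).1 hs
    exact ⟨i, hx⟩
  · obtain ⟨i, rfl⟩ := (mem_sons_seqTree L).1 hs
    obtain ⟨j, rfl⟩ := (mem_sons_seqTree L).1 ht
    exact hdisj u fun hij => hst (hij ▸ rfl)

theorem strictBranches_seqTree (h : ∀ u : ℕ → List ℕ,
      (∀ n, (u n).length = n ∧ ∃ i, u (n + 1) = u n ++ [i]) → ∃ p, ⋂ n, L (u n) = {p}) :
    (seqTree L).StrictBranches := by
  refine ⟨⟨([] : List ℕ)⟩, fun B hB => ?_⟩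
  obtain ⟨u, rfl, hu⟩ := exists_eq_range_of_isBranch hB
  obtain ⟨p, hp⟩ := h u hu
  exact ⟨p, (biInter_range (f := u) (g := L)).trans hp⟩

theorem piRefines_shoot_seqTree {u : List ℕ} {U : Set Y} (J : ℕ) (hne : (L (u ++ [J])).Nonempty)
    (hsub : ∀ i, J ≤ i → L (u ++ [i]) ⊆ U) : PiRefines ((seqTree L).shoot u) {U} := by
  rintro D rfl -
  refine ⟨⋃ s ∈ (fun i => u ++ [i]) '' Ici J, L s, ⟨_, ?_, ?_, rfl⟩, ?_, ?_⟩
  · rintro _ ⟨i, -, rfl⟩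
    exact (mem_sons_seqTree L).2 ⟨i, rfl⟩
  · refine ((finite_Iio J).image fun i => u ++ [i]).subset ?_
    rintro s ⟨hs, hsC⟩
    obtain ⟨i, rfl⟩ := (mem_sons_seqTree L).1 hs
    exact ⟨i, mem_Iio.2 (not_le.1 fun hi => hsC ⟨i, hi, rfl⟩), rfl⟩
  · exact hne.mono (subset_biUnion_of_mem (u := L) ⟨J, self_mem_Ici, rfl⟩)
  · exact iUnion₂_subset (by rintro _ ⟨i, hi, rfl⟩; exact hsub i hi)

end FoliageTree

theorem Monotone.exists_mem_Ico_int {α : Type*} [LinearOrder α] {g : ℤ → α} (hg : Monotone g)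
    {x : α} (hlo : ∃ j, g j ≤ x) (hhi : ∃ j, x < g j) : ∃ j, x ∈ Ico (g j) (g (j + 1)) := by
  obtain ⟨k, hk⟩ := hhi
  obtain ⟨j, hj, hmax⟩ := Int.exists_greatest_of_bdd
    ⟨k, fun z hz => le_of_lt (hg.reflect_lt (hz.trans_lt hk))⟩ hlo
  exact ⟨j, hj, lt_of_not_ge fun h => by simpa using hmax _ h⟩

theorem Nat.exists_mem_Ico_of_le_of_lt {α : Type*} [LinearOrder α] {g : ℕ → α} {x : α}
    (h₀ : g 0 ≤ x) (hhi : ∃ i, x < g i) : ∃ i, x ∈ Ico (g i) (g (i + 1)) := by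
  classical
  obtain ⟨i, hi⟩ : ∃ i, Nat.find hhi = i + 1 :=
    Nat.exists_eq_succ_of_ne_zero fun h => (Nat.find_spec hhi).not_ge (h ▸ h₀)
  exact ⟨i, not_lt.1 (Nat.find_min hhi (by omega)), hi ▸ Nat.find_spec hhi⟩

theorem Monotone.iInter_Ico_eq_singleton_ciSup {A B : ℕ → ℝ} (hA : Monotone A)
    (hB : ∀ n, B (n + 1) < B n) (hAB : ∀ n, A n ≤ B n) (hlen : ∀ ε > 0, ∃ n, B n - A n < ε) :
    ⋂ n, Ico (A n) (B n) = {⨆ n, A n} := by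
  have hmem := mem_iInter.1 <|
    hA.ciSup_mem_iInter_Icc_of_antitone (antitone_nat_of_succ_le fun n => (hB n).le) hAB
  ext z
  simp only [mem_iInter, mem_singleton_iff]
  refine ⟨fun hz => ?_, fun hz n => hz ▸ ⟨(hmem n).1, (hmem (n + 1)).2.trans_lt (hB n)⟩⟩
  by_contra hne
  obtain ⟨n, hn⟩ := hlen |z - ⨆ n, A n| (abs_pos.2 (sub_ne_zero.2 hne))
  have h₁ := hmem n
  have h₂ := hz n
  rcases abs_cases (z - ⨆ n, A n) with ⟨h, -⟩ | ⟨h, -⟩ <;> rw [h] at hn <;>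
    linarith [h₁.1, h₁.2, h₂.1, h₂.2]

theorem tendsto_two_mul_three_div_four_pow_div_two :
    Tendsto (fun n : ℕ => 2 * (3 / 4 : ℝ) ^ (n / 2)) atTop (𝓝 0) := by
  simpa using ((tendsto_pow_atTop_nhds_zero_of_lt_one (by norm_num) (by norm_num)).comp
    (Nat.tendsto_div_const_atTop two_ne_zero)).const_mul (2 : ℝ)

theorem piRefines_cofin {A : Set ℕ} (hA : A.Infinite) {𝒟 : Set (Set ℕ)}
    (h : ∀ D ∈ 𝒟, ∀ᶠ n in atTop, n ∈ A → n ∈ D) : PiRefines (cofin A) 𝒟 := by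
  intro D hD _
  obtain ⟨N, hN⟩ := eventually_atTop.1 (h D hD)
  refine ⟨A \ Iio N, ⟨A ∩ Iio N, (finite_Iio N).inter_of_right A, inter_subset_left,
    sdiff_self_inter.symm⟩, ?_, fun n hn => hN n (not_lt.1 hn.2) hn.1⟩
  obtain ⟨n, hnA, hNn⟩ := hA.exists_gt N
  exact ⟨n, hnA, not_lt.2 hNn.le⟩

namespace SorgenfreyPiTree

variable (X : Set ℝ)

noncomputable def pick (a b : ℝ) : ℝ := Classical.epsilon (· ∈ X ∩ Ioo a b)

variable {X} in
theorem pick_mem (hX : Dense X) {a b : ℝ} (hab : a < b) : pick X a b ∈ X ∩ Ioo a b :=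
  Classical.epsilon_spec (hX.exists_between hab)

noncomputable def between (s : ℤ → ℝ) (j : ℤ) : ℝ := pick X (s j) (s (j + 1))

section Between

variable {X} (hX : Dense X) {s : ℤ → ℝ} (hs : StrictMono s)
include hX hs

theorem between_mem (j : ℤ) : between X s j ∈ X ∩ Ioo (s j) (s (j + 1)) :=
  pick_mem hX (hs (lt_add_one j))

theorem strictMono_between : StrictMono (between X s) :=
  strictMono_int_of_lt_succ fun j =>
    (between_mem hX hs j).2.2.trans (between_mem hX hs (j + 1)).2.1

theorem between_succ_sub_lt (j : ℤ) : between X s (j + 1) - between X s j < s (j + 2) - s j := by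
  have h₁ := (between_mem hX hs j).2.1
  have h₂ := (between_mem hX hs (j + 1)).2.2
  rw [add_assoc, one_add_one_eq_two] at h₂
  linarith

theorem exists_mem_Ico_between {x : ℝ} (hlo : ∃ j, s j ≤ x) (hhi : ∃ j, x < s j) :
    ∃ j, x ∈ Ico (between X s j) (between X s (j + 1)) := by
  obtain ⟨j, hj⟩ := hlo
  obtain ⟨k, hk⟩ := hhi
  refine (strictMono_between hX hs).monotone.exists_mem_Ico_int ⟨j - 1, ?_⟩
    ⟨k, hk.trans (between_mem hX hs k).2.1⟩
  have := (between_mem hX hs (j - 1)).2.2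
  rw [sub_add_cancel] at this
  exact this.le.trans hj

end Between

noncomputable def logistic2 (j : ℤ) : ℝ := 2 ^ j / (1 + 2 ^ j)

theorem logistic2_pos (j : ℤ) : 0 < logistic2 j := by unfold logistic2; positivity

theorem logistic2_neg (j : ℤ) : logistic2 (-j) = 1 - logistic2 j := by
  have : (0 : ℝ) < 2 ^ j := by positivity
  unfold logistic2
  rw [zpow_neg]
  field_simp
  ring

theorem strictMono_logistic2 : StrictMono logistic2 := by
  refine strictMono_int_of_lt_succ fun j => ?_
  have : (0 : ℝ) < 2 ^ j := by positivity
  unfold logistic2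
  rw [zpow_add_one₀ two_ne_zero, div_lt_div_iff₀ (by positivity) (by positivity)]
  nlinarith

theorem logistic2_add_two_sub_le (j : ℤ) : logistic2 (j + 2) - logistic2 j ≤ 3 / 4 := by
  have ht : (0 : ℝ) < 2 ^ j := by positivity
  have h₂ : logistic2 (j + 2) = 4 * 2 ^ j / (1 + 4 * 2 ^ j) := by
    rw [logistic2, zpow_add₀ two_ne_zero]
    ring
  rw [h₂, logistic2, div_sub_div _ _ (by positivity) (by positivity), div_le_iff₀ (by positivity)]
  nlinarith

theorem exists_logistic2_lt {y : ℝ} (hy : 0 < y) : ∃ j, logistic2 j < y := by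
  obtain ⟨j, hj, -⟩ := exists_mem_Ioc_zpow hy one_lt_two
  refine ⟨j, lt_of_le_of_lt ?_ hj⟩
  exact div_le_self (by positivity) (le_add_of_nonneg_right (by positivity))

theorem exists_lt_logistic2 {y : ℝ} (hy : y < 1) : ∃ j, y < logistic2 j := by
  obtain ⟨j, hj⟩ := exists_logistic2_lt (sub_pos.2 hy)
  exact ⟨-j, by rw [logistic2_neg]; linarith⟩

theorem logistic2_lt_one (j : ℤ) : logistic2 j < 1 := by
  linarith [logistic2_neg j, logistic2_pos (-j)]

noncomputable def anchor (a b : ℝ) (j : ℤ) : ℝ := a + (b - a) * logistic2 j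

section Anchor

variable {a b : ℝ} (hab : a < b)
include hab

theorem strictMono_anchor : StrictMono (anchor a b) := fun _ _ hij =>
  (add_lt_add_iff_left a).2 (mul_lt_mul_of_pos_left (strictMono_logistic2 hij) (sub_pos.2 hab))

theorem anchor_mem_Ioo (j : ℤ) : anchor a b j ∈ Ioo a b := by
  have := logistic2_pos j
  have := logistic2_lt_one j
  constructor <;> unfold anchor <;> nlinarith

theorem anchor_add_two_sub_le (j : ℤ) : anchor a b (j + 2) - anchor a b j ≤ 3 / 4 * (b - a) := by
  have := logistic2_add_two_sub_le j
  unfold anchor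
  nlinarith

theorem exists_anchor_le {x : ℝ} (hx : a < x) : ∃ j, anchor a b j ≤ x := by
  obtain ⟨j, hj⟩ := exists_logistic2_lt (div_pos (sub_pos.2 hx) (sub_pos.2 hab))
  refine ⟨j, ?_⟩
  rw [lt_div_iff₀ (sub_pos.2 hab)] at hj
  unfold anchor
  linarith

theorem exists_lt_anchor {x : ℝ} (hx : x < b) : ∃ j, x < anchor a b j := by
  obtain ⟨j, hj⟩ := exists_lt_logistic2 ((div_lt_one (sub_pos.2 hab)).2 (sub_lt_sub_right hx a))
  refine ⟨j, ?_⟩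
  rw [div_lt_iff₀ (sub_pos.2 hab)] at hj
  unfold anchor
  linarith

end Anchor

noncomputable def ladder (a m b : ℝ) : ℕ → ℝ
  | 0 => a
  | 1 => m
  | i + 2 => between X (anchor m b) i

section Ladder

variable {X} (hX : Dense X) {a m b : ℝ} (ham : a < m) (hmb : m < b)
include hX hmb

theorem ladder_add_two_mem (i : ℕ) :
    ladder X a m b (i + 2) ∈ X ∩ Ioo (anchor m b i) (anchor m b (i + 1)) :=
  between_mem hX (strictMono_anchor hmb) i

theorem exists_lt_ladder {x : ℝ} (hx : x < b) : ∃ i, x < ladder X a m b i := by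
  obtain ⟨j, hj⟩ := exists_lt_anchor hmb hx
  refine ⟨j.toNat + 2, hj.trans_le ?_⟩
  exact (strictMono_anchor hmb).monotone (Int.self_le_toNat j) |>.trans
    (ladder_add_two_mem hX hmb j.toNat).2.1.le

theorem ladder_succ_sub_le (i : ℕ) :
    ladder X a m b (i + 1) - ladder X a m b i ≤ max (m - a) (3 / 4 * (b - m)) := by
  match i with
  | 0 => exact le_max_left _ _
  | 1 =>
    have h₁ := (between_mem hX (strictMono_anchor hmb) 0).2.2
    have h₂ : anchor m b 1 = m + (b - m) * (2 / 3) := by norm_num [anchor, logistic2]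
    norm_num at h₁
    exact le_max_of_le_right (by simp only [ladder, Nat.cast_zero]; linarith)
  | i + 2 =>
    have h₁ := between_succ_sub_lt hX (strictMono_anchor hmb) i
    have h₂ := anchor_add_two_sub_le hmb i
    exact le_max_of_le_right (by simp only [ladder]; push_cast; linarith)

include ham

theorem ladder_lt (i : ℕ) : ladder X a m b i < b := by
  match i with
  | 0 => exact ham.trans hmb
  | 1 => exact hmb
  | i + 2 => exact (ladder_add_two_mem hX hmb i).2.2.trans (anchor_mem_Ioo hmb _).2

theorem strictMono_ladder : StrictMono (ladder X a m b) := by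
  refine strictMono_nat_of_lt_succ fun i => ?_
  match i with
  | 0 => exact ham
  | 1 => exact (anchor_mem_Ioo hmb 0).1.trans (ladder_add_two_mem hX hmb 0).2.1
  | i + 2 =>
    have := (strictMono_between hX (strictMono_anchor hmb)) (lt_add_one (i : ℤ))
    simpa [ladder] using this

theorem ladder_eq_of_mem_Ico {i : ℕ} (hm : m ∈ Ico (ladder X a m b i) (ladder X a m b (i + 1))) :
    ladder X a m b i = m := by
  match i with
  | 0 => exact absurd hm.2 (lt_irrefl m)
  | i + 1 => exact le_antisymm hm.1 ((strictMono_ladder hX ham hmb).monotone (Nat.le_add_left 1 i))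

end Ladder

noncomputable def twoSidedIv (s : ℤ → ℝ) (i : ℕ) : ℝ × ℝ :=
  (between X s (Equiv.intEquivNat.symm i), between X s (Equiv.intEquivNat.symm i + 1))

section TwoSided

variable {X} (hX : Dense X) {s : ℤ → ℝ} (hs : StrictMono s)
include hX hs

theorem twoSidedIv_fst_mem (i : ℕ) : (twoSidedIv X s i).1 ∈ X := (between_mem hX hs _).1

theorem twoSidedIv_bounds (i : ℕ) :
    s (Equiv.intEquivNat.symm i) < (twoSidedIv X s i).1 ∧
      (twoSidedIv X s i).1 < (twoSidedIv X s i).2 ∧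
      (twoSidedIv X s i).2 < s (Equiv.intEquivNat.symm i + 2) := by
  refine ⟨(between_mem hX hs _).2.1, strictMono_between hX hs (lt_add_one _), ?_⟩
  have := (between_mem hX hs (Equiv.intEquivNat.symm i + 1)).2.2
  rwa [add_assoc, one_add_one_eq_two] at this

theorem exists_mem_twoSidedIv {x : ℝ} (hlo : ∃ j, s j ≤ x) (hhi : ∃ j, x < s j) :
    ∃ i, x ∈ Ico (twoSidedIv X s i).1 (twoSidedIv X s i).2 := by
  obtain ⟨j, hj⟩ := exists_mem_Ico_between hX hs hlo hhi
  exact ⟨Equiv.intEquivNat j, by simpa [twoSidedIv] using hj⟩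

theorem twoSidedIv_disjoint {i j : ℕ} (hij : i ≠ j) :
    Disjoint (Ico (twoSidedIv X s i).1 (twoSidedIv X s i).2)
      (Ico (twoSidedIv X s j).1 (twoSidedIv X s j).2) := by
  have := (strictMono_between hX hs).monotone.pairwise_disjoint_on_Ico_succ
    (Equiv.intEquivNat.symm.injective.ne hij)
  simp only [Function.onFun, Order.succ_eq_add_one] at this
  exact this

end TwoSided

variable (q : ℕ → ℝ)

open Classical in
noncomputable def firstCut (h : ℕ) (a b : ℝ) : ℝ :=
  if Odd h ∧ q (h / 2) ∈ Ioo a b \ X then q (h / 2)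
  -- a point of `X` (needed at even depths) in the left half (so that sons shrink)
  else pick X a ((a + b) / 2)

open Classical in
noncomputable def childIv (h : ℕ) (ab : ℝ × ℝ) (i : ℕ) : ℝ × ℝ :=
  if ab.1 ∈ X then
    (ladder X ab.1 (firstCut X q h ab.1 ab.2) ab.2 i,
      ladder X ab.1 (firstCut X q h ab.1 ab.2) ab.2 (i + 1))
  else twoSidedIv X (anchor ab.1 ab.2) i

variable {X q} in
theorem childIv_of_mem {h : ℕ} {ab : ℝ × ℝ} (ha : ab.1 ∈ X) (i : ℕ) :
    childIv X q h ab i = (ladder X ab.1 (firstCut X q h ab.1 ab.2) ab.2 i,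
      ladder X ab.1 (firstCut X q h ab.1 ab.2) ab.2 (i + 1)) :=
  if_pos ha

variable {X q} in
theorem childIv_of_not_mem {h : ℕ} {ab : ℝ × ℝ} (ha : ab.1 ∉ X) (i : ℕ) :
    childIv X q h ab i = twoSidedIv X (anchor ab.1 ab.2) i :=
  if_neg ha

section Child

variable {X} {q} (hX : Dense X) {h : ℕ} {ab : ℝ × ℝ} (hab : ab.1 < ab.2)
include hX hab

theorem firstCut_mem_Ioo : firstCut X q h ab.1 ab.2 ∈ Ioo ab.1 ab.2 := by
  unfold firstCut
  split_ifs with hq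
  · exact hq.2.1
  · have := (pick_mem hX (left_lt_add_div_two.2 hab)).2
    exact ⟨this.1, this.2.trans (add_div_two_lt_right.2 hab)⟩

theorem firstCut_of_even (he : Even h) :
    firstCut X q h ab.1 ab.2 ∈ X ∩ Ioo ab.1 ((ab.1 + ab.2) / 2) := by
  rw [firstCut, if_neg fun hq => Nat.not_odd_iff_even.2 he hq.1]
  exact pick_mem hX (left_lt_add_div_two.2 hab)

theorem childIv_bounds (i : ℕ) :
    ab.1 ≤ (childIv X q h ab i).1 ∧ (childIv X q h ab i).1 < (childIv X q h ab i).2 ∧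
      (childIv X q h ab i).2 < ab.2 := by
  by_cases ha : ab.1 ∈ X
  · obtain ⟨hm₁, hm₂⟩ := firstCut_mem_Ioo (h := h) (q := q) hX hab
    have hmono := strictMono_ladder hX hm₁ hm₂
    rw [childIv_of_mem ha]
    exact ⟨hmono.monotone (Nat.zero_le i), hmono (lt_add_one i), ladder_lt hX hm₁ hm₂ _⟩
  · obtain ⟨h₁, h₂, h₃⟩ := twoSidedIv_bounds hX (strictMono_anchor hab) i
    rw [childIv_of_not_mem ha]
    exact ⟨(anchor_mem_Ioo hab _).1.le.trans h₁.le, h₂, h₃.trans (anchor_mem_Ioo hab _).2⟩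

theorem childIv_fst_mem_of_even (he : Even h) (i : ℕ) : (childIv X q h ab i).1 ∈ X := by
  by_cases ha : ab.1 ∈ X
  · rw [childIv_of_mem ha]
    match i with
    | 0 => exact ha
    | 1 => exact (firstCut_of_even hX hab he).1
    | i + 2 => exact (ladder_add_two_mem (a := ab.1) hX (firstCut_mem_Ioo hX hab).2 i).1
  · rw [childIv_of_not_mem ha]
    exact twoSidedIv_fst_mem hX (strictMono_anchor hab) i

theorem childIv_length_le (i : ℕ) :
    (childIv X q h ab i).2 - (childIv X q h ab i).1 ≤ ab.2 - ab.1 ∧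
      (Even h → (childIv X q h ab i).2 - (childIv X q h ab i).1 ≤ 3 / 4 * (ab.2 - ab.1)) := by
  by_cases ha : ab.1 ∈ X
  · obtain ⟨hm₁, hm₂⟩ := firstCut_mem_Ioo (h := h) (q := q) hX hab
    have hgap := ladder_succ_sub_le hX (a := ab.1) hm₂ i
    rw [childIv_of_mem ha]
    refine ⟨hgap.trans (max_le (by linarith) (by linarith)), fun he => ?_⟩
    have := (firstCut_of_even (q := q) hX hab he).2.2
    exact hgap.trans (max_le (by linarith) (by linarith))
  · have hs := strictMono_anchor hab
    have h₁ := (twoSidedIv_bounds hX hs i).1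
    have h₂ := (twoSidedIv_bounds hX hs i).2.2
    have h₃ := anchor_add_two_sub_le hab (Equiv.intEquivNat.symm i)
    rw [childIv_of_not_mem ha]
    exact ⟨by linarith, fun _ => by linarith⟩

theorem exists_mem_childIv {x : ℝ} (hx : x ∈ X) (hxab : x ∈ Ico ab.1 ab.2) :
    ∃ i, x ∈ Ico (childIv X q h ab i).1 (childIv X q h ab i).2 := by
  by_cases ha : ab.1 ∈ X
  · simp_rw [childIv_of_mem ha]
    exact Nat.exists_mem_Ico_of_le_of_lt hxab.1
      (exists_lt_ladder hX (firstCut_mem_Ioo hX hab).2 hxab.2)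
  · simp_rw [childIv_of_not_mem ha]
    have hax : ab.1 < x := hxab.1.lt_of_ne fun e => ha (e ▸ hx)
    exact exists_mem_twoSidedIv hX (strictMono_anchor hab) (exists_anchor_le hab hax)
      (exists_lt_anchor hab hxab.2)

theorem childIv_disjoint {i j : ℕ} (hij : i ≠ j) :
    Disjoint (Ico (childIv X q h ab i).1 (childIv X q h ab i).2)
      (Ico (childIv X q h ab j).1 (childIv X q h ab j).2) := by
  by_cases ha : ab.1 ∈ X
  · obtain ⟨hm₁, hm₂⟩ := firstCut_mem_Ioo (h := h) (q := q) hX hab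
    have := (strictMono_ladder hX hm₁ hm₂).monotone.pairwise_disjoint_on_Ico_succ hij
    simp only [Function.onFun, Order.succ_eq_add_one] at this
    rwa [childIv_of_mem ha, childIv_of_mem ha]
  · rw [childIv_of_not_mem ha, childIv_of_not_mem ha]
    exact twoSidedIv_disjoint hX (strictMono_anchor hab) hij

theorem exists_forall_childIv_subset (ha : ab.1 ∈ X) {x : ℝ} (hx : x < ab.2) :
    ∃ J, ∀ i, J ≤ i → Ico (childIv X q h ab i).1 (childIv X q h ab i).2 ⊆ Ioo x ab.2 := by
  obtain ⟨hm₁, hm₂⟩ := firstCut_mem_Ioo (h := h) (q := q) hX hab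
  have hmono := strictMono_ladder hX hm₁ hm₂
  obtain ⟨J, hJ⟩ := exists_lt_ladder hX (a := ab.1) hm₂ hx
  refine ⟨J, fun i hi y hy => ?_⟩
  rw [childIv_of_mem ha] at hy
  exact ⟨hJ.trans_le ((hmono.monotone hi).trans hy.1), hy.2.trans (ladder_lt hX hm₁ hm₂ _)⟩

end Child

variable {X q} in
theorem childIv_fst_eq_of_mem (hX : Dense X) {h : ℕ} {ab : ℝ × ℝ} (ho : Odd h) (ha : ab.1 ∈ X)
    (hq : q (h / 2) ∈ Ioo ab.1 ab.2 \ X)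
    {i : ℕ} (hi : q (h / 2) ∈ Ico (childIv X q h ab i).1 (childIv X q h ab i).2) :
    (childIv X q h ab i).1 = q (h / 2) := by
  have hm : firstCut X q h ab.1 ab.2 = q (h / 2) := if_pos ⟨ho, hq⟩
  rw [childIv_of_mem ha, hm] at hi ⊢
  exact ladder_eq_of_mem_Ico hX hq.1.1 hq.1.2 hi

/-- The interval `[a, b)` of a node `u ≠ []`, computed on the reversed list so that the last
index is peeled off first. The root's cell is all of `ℝ`, so `nodeIv X q []` is junk. -/
noncomputable def nodeIv (u : List ℕ) : ℝ × ℝ := go u.reverse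
where
  go : List ℕ → ℝ × ℝ
  | [] => (0, 0)
  | [i] => twoSidedIv X Int.cast i
  | i :: j :: r => childIv X q (r.length + 1) (go (j :: r)) i

theorem nodeIv_singleton (i : ℕ) : nodeIv X q [i] = twoSidedIv X Int.cast i := rfl

theorem nodeIv_append {u : List ℕ} (hu : u ≠ []) (i : ℕ) :
    nodeIv X q (u ++ [i]) = childIv X q u.length (nodeIv X q u) i := by
  obtain ⟨j, r, hr⟩ := List.exists_cons_of_ne_nil (List.reverse_ne_nil_iff.2 hu)
  have hlen : u.length = r.length + 1 := by simpa using congrArg List.length hr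
  simp [nodeIv, hr, nodeIv.go, hlen]

noncomputable def cell (u : List ℕ) : Set ℝ :=
  if u = [] then univ else Ico (nodeIv X q u).1 (nodeIv X q u).2

theorem cell_nil : cell X q [] = univ := if_pos rfl

theorem cell_of_ne_nil {u : List ℕ} (hu : u ≠ []) :
    cell X q u = Ico (nodeIv X q u).1 (nodeIv X q u).2 := if_neg hu

section Cell

variable {X q} (hX : Dense X)
include hX

theorem nodeIv_fst_lt_snd {u : List ℕ} (hu : u ≠ []) : (nodeIv X q u).1 < (nodeIv X q u).2 := by
  induction u using List.reverseRecOn with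
  | nil => exact absurd rfl hu
  | append_singleton v i ih =>
    rcases eq_or_ne v [] with rfl | hv
    · exact (twoSidedIv_bounds hX Int.cast_strictMono i).2.1
    · rw [nodeIv_append X q hv]
      exact (childIv_bounds hX (ih hv) i).2.1

theorem cell_append_subset (u : List ℕ) (i : ℕ) : cell X q (u ++ [i]) ⊆ cell X q u := by
  rcases eq_or_ne u [] with rfl | hu
  · exact (cell_nil X q).symm ▸ subset_univ _
  · obtain ⟨h₁, -, h₃⟩ := childIv_bounds (q := q) (h := u.length) hX (nodeIv_fst_lt_snd hX hu) i
    rw [cell_of_ne_nil X q (by simp), cell_of_ne_nil X q hu, nodeIv_append X q hu]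
    exact Ico_subset_Ico h₁ h₃.le

theorem exists_mem_cell_append {x : ℝ} (hx : x ∈ X) {u : List ℕ} (hxu : x ∈ cell X q u) :
    ∃ i, x ∈ cell X q (u ++ [i]) := by
  simp_rw [cell_of_ne_nil X q (List.append_ne_nil_of_right_ne_nil u (List.cons_ne_nil _ []))]
  rcases eq_or_ne u [] with rfl | hu
  · simp_rw [List.nil_append, nodeIv_singleton]
    exact exists_mem_twoSidedIv hX Int.cast_strictMono ⟨⌊x⌋, Int.floor_le x⟩
      ⟨⌊x⌋ + 1, by exact_mod_cast Int.lt_floor_add_one x⟩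
  · rw [cell_of_ne_nil X q hu] at hxu
    simp_rw [nodeIv_append X q hu]
    exact exists_mem_childIv hX (nodeIv_fst_lt_snd hX hu) hx hxu

theorem cell_append_disjoint (u : List ℕ) {i j : ℕ} (hij : i ≠ j) :
    Disjoint (cell X q (u ++ [i])) (cell X q (u ++ [j])) := by
  rw [cell_of_ne_nil X q (by simp), cell_of_ne_nil X q (by simp)]
  rcases eq_or_ne u [] with rfl | hu
  · exact twoSidedIv_disjoint hX Int.cast_strictMono hij
  · rw [nodeIv_append X q hu, nodeIv_append X q hu]
    exact childIv_disjoint hX (nodeIv_fst_lt_snd hX hu) hij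

theorem nodeIv_append_fst_mem {u : List ℕ} (hu : Even u.length) (i : ℕ) :
    (nodeIv X q (u ++ [i])).1 ∈ X := by
  rcases eq_or_ne u [] with rfl | hu₀
  · exact twoSidedIv_fst_mem hX Int.cast_strictMono i
  · rw [nodeIv_append X q hu₀]
    exact childIv_fst_mem_of_even hX (nodeIv_fst_lt_snd hX hu₀) hu i

/-- Sons of the root have length `< 2`; sons shrink by `3/4` below nodes of even length and
never grow. -/
theorem nodeIv_append_length_le (u : List ℕ) (i : ℕ) :
    (nodeIv X q (u ++ [i])).2 - (nodeIv X q (u ++ [i])).1 ≤ 2 * (3 / 4) ^ (u.length / 2) := by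
  induction u using List.reverseRecOn generalizing i with
  | nil =>
    have h := twoSidedIv_bounds hX Int.cast_strictMono i
    push_cast at h
    simp only [List.nil_append, nodeIv_singleton, List.length_nil, Nat.zero_div, pow_zero]
    linarith
  | append_singleton v j ih =>
    have hlen := childIv_length_le (q := q) (h := (v ++ [j]).length) hX
      (nodeIv_fst_lt_snd (q := q) (u := v ++ [j]) hX (by simp)) i
    rw [nodeIv_append X q (by simp)]
    rcases Nat.even_or_odd (v ++ [j]).length with he | ho
    · have hv : (v ++ [j]).length / 2 = v.length / 2 + 1 := by
        rw [List.length_append, List.length_singleton] at he ⊢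
        obtain ⟨k, hk⟩ := he
        omega
      rw [hv, pow_succ]
      nlinarith [hlen.2 he, ih j]
    · have hv : (v ++ [j]).length / 2 = v.length / 2 := by
        rw [List.length_append, List.length_singleton] at ho ⊢
        obtain ⟨k, hk⟩ := ho
        omega
      rw [hv]
      exact hlen.1.trans (ih j)

theorem inter_cell_nonempty (u : List ℕ) : (X ∩ cell X q u).Nonempty := by
  rcases eq_or_ne u [] with rfl | hu
  · obtain ⟨x, hx⟩ := hX.nonempty
    exact ⟨x, hx, (cell_nil X q).symm ▸ mem_univ x⟩
  · obtain ⟨hxX, hx⟩ := pick_mem hX (nodeIv_fst_lt_snd hX hu)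
    exact ⟨_, hxX, (cell_of_ne_nil X q hu).symm ▸ Ioo_subset_Ico_self hx⟩

theorem exists_length_eq_mem_cell {x : ℝ} (hx : x ∈ X) (n : ℕ) :
    ∃ v, v.length = n ∧ x ∈ cell X q v := by
  induction n with
  | zero => exact ⟨[], rfl, (cell_nil X q).symm ▸ mem_univ x⟩
  | succ n ih =>
    obtain ⟨v, hv, hxv⟩ := ih
    obtain ⟨i, hi⟩ := exists_mem_cell_append hX hx hxv
    exact ⟨v ++ [i], by simp [hv], hi⟩

/-- A node of odd length has its left end in `X`, so its sons come from a `ladder`. -/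
theorem exists_forall_cell_append_subset {v : List ℕ} (hv : Odd v.length) {p : ℝ}
    (hp : p ∈ cell X q v) : ∃ J, ∀ i, J ≤ i →
      cell X q (v ++ [i]) ⊆ Ico p (p + 2 * (3 / 4) ^ ((v.length - 1) / 2)) := by
  have hv₀ : v ≠ [] := by rintro rfl; simp at hv
  have hlast := List.dropLast_append_getLast hv₀
  have hlen : v.dropLast.length = v.length - 1 := List.length_dropLast
  have ha : (nodeIv X q v).1 ∈ X := by
    rw [← hlast]
    exact nodeIv_append_fst_mem hX (hlen ▸ Nat.Odd.sub_odd hv odd_one) _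
  have hsmall := nodeIv_append_length_le (q := q) hX v.dropLast (v.getLast hv₀)
  rw [hlast, hlen] at hsmall
  rw [cell_of_ne_nil X q hv₀] at hp
  obtain ⟨J, hJ⟩ := exists_forall_childIv_subset (q := q) (h := v.length) hX
    (nodeIv_fst_lt_snd hX hv₀) ha hp.2
  refine ⟨J, fun i hi => ?_⟩
  rw [cell_of_ne_nil X q (by simp), nodeIv_append X q hv₀]
  exact (hJ i hi).trans fun y hy => ⟨hy.1.le, by linarith [hp.1, hy.2]⟩

end Cell

section Branch

variable {X q} {u : ℕ → List ℕ} (hu : ∀ n, (u n).length = n ∧ ∃ i, u (n + 1) = u n ++ [i])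
include hu

theorem succ_ne_nil (n : ℕ) : u (n + 1) ≠ [] :=
  List.ne_nil_of_length_pos (by rw [(hu (n + 1)).1]; omega)

theorem nodeIv_succ_succ (n : ℕ) :
    ∃ i, nodeIv X q (u (n + 1 + 1)) = childIv X q (n + 1) (nodeIv X q (u (n + 1))) i := by
  obtain ⟨hlen, i, hi⟩ := hu (n + 1)
  exact ⟨i, by rw [hi, nodeIv_append X q (succ_ne_nil hu n), hlen]⟩

theorem iInter_cell_eq :
    ⋂ n, cell X q (u n) = ⋂ n, Ico (nodeIv X q (u (n + 1))).1 (nodeIv X q (u (n + 1))).2 := by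
  ext x
  simp only [mem_iInter]
  refine ⟨fun hx n => cell_of_ne_nil X q (succ_ne_nil hu n) ▸ hx (n + 1), fun hx n => ?_⟩
  rcases n with _ | n
  · rw [List.eq_nil_of_length_eq_zero (hu 0).1, cell_nil]
    exact mem_univ x
  · exact (cell_of_ne_nil X q (succ_ne_nil hu n)).symm ▸ hx n

variable (hX : Dense X)
include hX

theorem nodeIv_fst_mem_of_even {n : ℕ} (hn : Even n) : (nodeIv X q (u (n + 1))).1 ∈ X := by
  obtain ⟨hlen, i, hi⟩ := hu n
  rw [hi]
  exact nodeIv_append_fst_mem hX (by rwa [hlen]) i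

theorem nodeIv_succ_bounds (n : ℕ) :
    (nodeIv X q (u (n + 1))).1 ≤ (nodeIv X q (u (n + 1 + 1))).1 ∧
      (nodeIv X q (u (n + 1 + 1))).2 < (nodeIv X q (u (n + 1))).2 := by
  obtain ⟨i, hi⟩ := nodeIv_succ_succ (q := q) hu n
  obtain ⟨h₁, -, h₃⟩ :=
    childIv_bounds (q := q) (h := n + 1) hX (nodeIv_fst_lt_snd hX (succ_ne_nil hu n)) i
  rw [hi]
  exact ⟨h₁, h₃⟩

theorem exists_nodeIv_length_lt {ε : ℝ} (hε : 0 < ε) :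
    ∃ n, (nodeIv X q (u (n + 1))).2 - (nodeIv X q (u (n + 1))).1 < ε := by
  obtain ⟨n, hn⟩ := (tendsto_two_mul_three_div_four_pow_div_two.eventually (gt_mem_nhds hε)).exists
  obtain ⟨hlen, i, hi⟩ := hu n
  refine ⟨n, lt_of_le_of_lt ?_ hn⟩
  simpa only [hi, hlen] using nodeIv_append_length_le (q := q) hX (u n) i

/-- A point of `(ℝ \ X) ∩ ⋂ cells` is some `q k`, so it was cut out at depth `2k+1` and became a
left end. -/
theorem exists_nodeIv_fst_eq (hq : Xᶜ ⊆ range q) {L : ℝ} (hL : ∀ n, L ∈ cell X q (u n))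
    (hLX : L ∉ X) : ∃ n, (nodeIv X q (u (n + 1))).1 = L := by
  obtain ⟨k, hk⟩ := hq hLX
  obtain ⟨i, hi⟩ := nodeIv_succ_succ (q := q) hu (2 * k)
  have hk' : q ((2 * k + 1) / 2) = L := by rw [← hk]; congr 1; omega
  have ha := nodeIv_fst_mem_of_even hu hX (q := q) (even_two_mul k)
  have hLab := hL (2 * k + 1)
  have hLchild := hL (2 * k + 1 + 1)
  rw [cell_of_ne_nil X q (succ_ne_nil hu _)] at hLab hLchild
  rw [hi] at hLchild
  refine ⟨2 * k + 1, ?_⟩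
  rw [hi]
  refine hk' ▸ childIv_fst_eq_of_mem hX (odd_two_mul_add_one k) ha ?_ (hk'.symm ▸ hLchild)
  exact hk'.symm ▸ ⟨⟨hLab.1.lt_of_ne fun h => hLX (h ▸ ha), hLab.2⟩, hLX⟩

theorem exists_inter_iInter_cell_eq (hq : Xᶜ ⊆ range q) :
    ∃ p ∈ X, X ∩ ⋂ n, cell X q (u n) = {p} := by
  have hmono : Monotone fun n => (nodeIv X q (u (n + 1))).1 :=
    monotone_nat_of_le_succ fun n => (nodeIv_succ_bounds hu hX n).1
  have hI := hmono.iInter_Ico_eq_singleton_ciSup (B := fun n => (nodeIv X q (u (n + 1))).2)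
    (fun n => (nodeIv_succ_bounds hu hX n).2)
    (fun n => (nodeIv_fst_lt_snd hX (succ_ne_nil hu n)).le)
    (fun _ hε => exists_nodeIv_length_lt hu hX hε)
  beta_reduce at hI
  rw [← iInter_cell_eq hu] at hI
  set L := ⨆ n, (nodeIv X q (u (n + 1))).1
  have hL : ∀ n, L ∈ cell X q (u n) := mem_iInter.1 (hI ▸ mem_singleton L)
  have hLX : L ∈ X := by
    by_contra hLX
    obtain ⟨n, hn⟩ := exists_nodeIv_fst_eq hu hX hq hL hLX
    have h2n : (nodeIv X q (u (2 * n + 1))).1 = L := by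
      have := hL (2 * n + 1)
      rw [cell_of_ne_nil X q (succ_ne_nil hu _)] at this
      exact le_antisymm this.1 (hn ▸ hmono (by omega))
    exact hLX (h2n ▸ nodeIv_fst_mem_of_even hu hX (even_two_mul n))
  exact ⟨L, hLX, by rw [hI, inter_eq_right.2 (singleton_subset_iff.2 hLX)]⟩

end Branch

end SorgenfreyPiTree

namespace SorgLine

/- `SorgLine` is `ℝ` stripped of its order and arithmetic; these two identity maps give them
back. -/

def toReal (x : SorgLine) : ℝ := x

def ofReal (x : ℝ) : SorgLine := x

theorem isTopologicalBasis_Ico :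
    TopologicalSpace.IsTopologicalBasis {s : Set SorgLine | ∃ a b : ℝ, s = toReal ⁻¹' Ico a b} where
  exists_subset_inter := by
    rintro _ ⟨a₁, b₁, rfl⟩ _ ⟨a₂, b₂, rfl⟩ x ⟨hx₁, hx₂⟩
    refine ⟨toReal ⁻¹' Ico x.toReal (min b₁ b₂), ⟨_, _, rfl⟩, ⟨le_rfl, lt_min hx₁.2 hx₂.2⟩,
      fun y hy => ⟨⟨hx₁.1.trans hy.1, hy.2.trans_le (min_le_left _ _)⟩,
        ⟨hx₂.1.trans hy.1, hy.2.trans_le (min_le_right _ _)⟩⟩⟩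
  sUnion_eq := eq_univ_of_forall fun x => ⟨_, ⟨x.toReal, x.toReal + 1, rfl⟩, le_rfl, lt_add_one _⟩
  eq_generateFrom := rfl

theorem isOpen_Ico (a b : ℝ) : IsOpen (toReal ⁻¹' Ico a b) :=
  isTopologicalBasis_Ico.isOpen ⟨a, b, rfl⟩

theorem exists_Ico_subset_of_mem_nhds {X : Set SorgLine} {p : X} {U : Set X} (hU : U ∈ 𝓝 p) :
    ∃ ε > 0, {x : X | x.1.toReal ∈ Ico p.1.toReal (p.1.toReal + ε)} ⊆ U := by
  obtain ⟨V, hV, hVU⟩ := (mem_nhds_subtype X p U).1 hU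
  obtain ⟨_, ⟨a, b, rfl⟩, hp, hsub⟩ := isTopologicalBasis_Ico.mem_nhds_iff.1 hV
  refine ⟨b - p.1.toReal, sub_pos.2 hp.2, fun x hx => hVU (hsub ⟨hp.1.trans hx.1, ?_⟩)⟩
  linarith [hx.2]

end SorgLine

namespace SorgenfreyPiTree

open SorgLine

noncomputable def piTree (X : Set SorgLine) (q : ℕ → ℝ) : FoliageTree X :=
  FoliageTree.seqTree fun u => {x : X | x.1.toReal ∈ cell (ofReal ⁻¹' X) q u}

variable {X : Set SorgLine} {q : ℕ → ℝ} (hX : Dense (ofReal ⁻¹' X))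

theorem openIn_piTree : (piTree X q).OpenIn := by
  intro u
  refine (show IsOpen (toReal ⁻¹' cell (ofReal ⁻¹' X) q u) from ?_).preimage continuous_subtype_val
  unfold cell
  split_ifs
  exacts [isOpen_univ, isOpen_Ico _ _]

include hX

theorem locallyStrict_piTree : (piTree X q).LocallyStrict := by
  refine FoliageTree.locallyStrict_seqTree _ (fun u => ?_) fun u i j hij => ?_
  · ext x
    simp only [mem_iUnion, mem_ofPred_eq]
    exact ⟨exists_mem_cell_append hX x.2, fun ⟨i, hi⟩ => cell_append_subset hX u i hi⟩
  · exact (cell_append_disjoint hX u hij).preimage _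

theorem strictBranches_piTree (hq : (ofReal ⁻¹' X)ᶜ ⊆ range q) : (piTree X q).StrictBranches := by
  refine FoliageTree.strictBranches_seqTree _ fun u hu => ?_
  obtain ⟨p, hpX, hp⟩ := exists_inter_iInter_cell_eq hu hX hq
  refine ⟨⟨p, hpX⟩, ext fun x => ?_⟩
  have hx := Set.ext_iff.1 hp x.1.toReal
  simp only [mem_inter_iff, mem_iInter, mem_singleton_iff] at hx
  simp only [mem_iInter, mem_ofPred_eq, mem_singleton_iff, Subtype.ext_iff]
  exact (and_iff_right x.2).symm.trans hx

theorem eventually_mem_rise_piTree (p : X) {U : Set X} (hU : U ∈ 𝓝 p) :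
    ∀ᶠ n in atTop, Odd n → n ∈ (piTree X q).rise p U := by
  obtain ⟨ε, hε, hsub⟩ := exists_Ico_subset_of_mem_nhds hU
  have hsmall := (tendsto_two_mul_three_div_four_pow_div_two.comp
    (tendsto_sub_atTop_nat 1)).eventually (gt_mem_nhds hε)
  filter_upwards [hsmall] with n hn hodd
  obtain ⟨v, rfl, hpv⟩ := exists_length_eq_mem_cell (q := q) hX p.2 n
  obtain ⟨J, hJ⟩ := exists_forall_cell_append_subset hX hodd hpv
  refine ⟨v, hpv, FoliageTree.piRefines_shoot_seqTree _ J ?_ fun i hi x hx => hsub ?_,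
    FoliageTree.height_seqTree _ v⟩
  · obtain ⟨y, hyX, hy⟩ := inter_cell_nonempty (q := q) hX (v ++ [J])
    exact ⟨⟨y, hyX⟩, hy⟩
  · have := hJ i hi hx
    exact ⟨this.1, this.2.trans_le ((add_le_add_iff_left _).2 hn.le)⟩

theorem isPiTree_piTree (hq : (ofReal ⁻¹' X)ᶜ ⊆ range q) : (piTree X q).IsPiTree := by
  refine ⟨⟨openIn_piTree, locallyStrict_piTree hX, FoliageTree.isOmegaOmegaTree_seqTree _,
    strictBranches_piTree hX hq, [], FoliageTree.isRoot_seqTree _, ?_⟩, fun p U hU => ?_⟩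
  · exact eq_univ_of_forall fun x =>
      show x.1.toReal ∈ cell _ q [] from (cell_nil (ofReal ⁻¹' X) q).symm ▸ mem_univ _
  · obtain ⟨N, hN⟩ := eventually_atTop.1 (eventually_mem_rise_piTree hX p hU)
    obtain ⟨v, hv, hpi, -⟩ := hN (2 * N + 1) (by omega) (odd_two_mul_add_one N)
    exact ⟨v, hv, hpi⟩

theorem piRefines_cofin_rise_piTree :
    PiRefines (cofin {k | ∃ n : ℕ, k = 2 * n + 1}) (piTree X q).Rise := by
  have hodd : {k | ∃ n : ℕ, k = 2 * n + 1}.Infinite :=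
    infinite_of_forall_exists_gt fun N => ⟨2 * N + 1, ⟨N, rfl⟩, by omega⟩
  refine piRefines_cofin hodd ?_
  rintro _ ⟨p, U, hU, rfl⟩
  exact eventually_mem_rise_piTree hX p hU

end SorgenfreyPiTree

/-- Part (c) of Lemma `lem.pi.tree.for.N.and.Sorg.l` of the paper. -/
theorem cocountable_sorgenfrey_subspace_has_piTree
    (X : Set SorgLine) (hX : Xᶜ.Countable) :
    ∃ H : FoliageTree ↥X, H.IsPiTree ∧
      PiRefines (cofin {k | ∃ n : ℕ, k = 2 * n + 1}) H.Rise := by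
  have hXℝ : (SorgLine.ofReal ⁻¹' X)ᶜ.Countable := hX
  obtain ⟨q, hq⟩ := countable_iff_exists_subset_range.1 hXℝ
  have hdense : Dense (SorgLine.ofReal ⁻¹' X) := by simpa using hXℝ.dense_compl ℝ
  exact ⟨SorgenfreyPiTree.piTree X q, SorgenfreyPiTree.isPiTree_piTree hdense hq,
    SorgenfreyPiTree.piRefines_cofin_rise_piTree hdense⟩
end

section
/- If F is a π-tree on a topological space X, then: the family of leaves {F_v : v a node of F} is a countable π-base for X; each leaf F_v is closed-and-open in X; and for every p ∈ X, the intersection of all leaves containing p equals {p}. -/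
open Set

universe u v

/-
The sons of a node of an `ω,ω`-tree are its one-letter extensions, so local strictness splits
every leaf into the disjoint leaves of its sons. Hence the complement of a leaf is the complement
of its father's leaf together with the leaves of its brothers, and by induction every leaf is
clopen. Two leaves containing the same point lie on comparable nodes (at the first place where
their sequences differ the leaves would be disjoint), so the nodes whose leaf contains `p` form a
branch, whose leaves meet exactly in `p`. Any node lies on a branch by Hausdorff's maximality
principle, so every leaf is nonempty; and growing into `X` yields, inside every nonempty open set,
a nonempty union of leaves, hence a whole leaf.
-/

open Set

namespace List

theorem seqLT_length_lt {a b : List ℕ} (h : seqLT a b) : a.length < b.length :=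
  lt_of_le_of_ne h.1.length_le fun hl => h.2 (h.1.eq_of_length hl)

theorem seqLT_append_singleton (a : List ℕ) (n : ℕ) : seqLT a (a ++ [n]) :=
  ⟨prefix_append _ _, by simp⟩

theorem seqLT_covBy_iff {a b : List ℕ} :
    (seqLT a b ∧ ¬ ∃ c, seqLT a c ∧ seqLT c b) ↔ ∃ n, b = a ++ [n] := by
  constructor
  · rintro ⟨⟨⟨d, rfl⟩, hne⟩, hcov⟩
    match d with
    | [] => simp at hne
    | [n] => exact ⟨n, rfl⟩
    | n :: m :: d =>
      exact (hcov ⟨a ++ [n], seqLT_append_singleton a n, ⟨by simp, by simp⟩⟩).elim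
  · rintro ⟨n, rfl⟩
    refine ⟨seqLT_append_singleton a n, ?_⟩
    rintro ⟨c, hac, hcb⟩
    have := seqLT_length_lt hac
    have := seqLT_length_lt hcb
    simp only [length_append, length_singleton] at *
    omega

end List

namespace FoliageTree

variable {X : Type u} {F : FoliageTree X}

theorem isChainN_iff {C : Set F.Node} : F.IsChainN C ↔ IsChain F.lt C :=
  ⟨fun h x hx y hy hxy => (h x hx y hy).imp_right (Or.resolve_left · hxy),
    fun h x hx y hy => (eq_or_ne x y).elim (fun hxy => Or.inr (Or.inl hxy))
      fun hxy => (h hx hy hxy).imp_right Or.inr⟩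

theorem isBranch_iff {B : Set F.Node} : F.IsBranch B ↔ IsMaxChain F.lt B := by
  simp only [IsBranch, IsMaxChain, isChainN_iff]

theorem exists_isBranch_mem (v : F.Node) : ∃ B, F.IsBranch B ∧ v ∈ B := by
  obtain ⟨B, hB, hvB⟩ := (subsingleton_singleton (a := v)).isChain (r := F.lt).exists_maxChain
  exact ⟨B, isBranch_iff.2 hB, hvB rfl⟩

theorem leaf_nonempty (hsb : F.StrictBranches) (v : F.Node) : (F.leaf v).Nonempty := by
  obtain ⟨B, hB, hvB⟩ := exists_isBranch_mem v
  obtain ⟨q, hq⟩ := hsb.2 B hB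
  exact ⟨q, mem_iInter₂.1 (hq ▸ mem_singleton q) v hvB⟩

theorem iInter_scope_eq_singleton (hsb : F.StrictBranches) {p : X}
    (hp : F.IsBranch (F.scope p)) : (⋂ v ∈ F.scope p, F.leaf v) = {p} := by
  obtain ⟨q, hq⟩ := hsb.2 _ hp
  have hpq : p ∈ ⋂ v ∈ F.scope p, F.leaf v := mem_iInter₂.2 fun _ hv => hv
  rw [hq] at hpq ⊢
  rw [mem_singleton_iff.1 hpq]

theorem exists_leaf_subset [TopologicalSpace X] (hgrow : F.GrowsInto) {U : Set X}
    (hU : IsOpen U) (hUne : U.Nonempty) : ∃ v, F.leaf v ⊆ U := by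
  obtain ⟨p, hp⟩ := hUne
  obtain ⟨z, -, href⟩ := hgrow p U (hU.mem_nhds hp)
  obtain ⟨-, ⟨C, -, -, rfl⟩, ⟨x, hx⟩, hCU⟩ := href U rfl ⟨p, hp⟩
  obtain ⟨s, hs, -⟩ := mem_iUnion₂.1 hx
  exact ⟨s, (subset_iUnion₂ (s := fun s (_ : s ∈ C) => F.leaf s) s hs).trans hCU⟩

section OmegaOmega

variable (e : F.lt ≃r seqLT)

theorem eq_symm_nil_of_isRoot {r : F.Node} (hr : F.IsRoot r) : r = e.symm [] :=
  (hr _).resolve_right fun h => by simpa using List.seqLT_length_lt (e.map_rel_iff.2 h)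

theorem lt_or_eq_of_prefix {x y : F.Node} (h : e x <+: e y) : F.lt x y ∨ x = y :=
  (eq_or_ne (e x) (e y)).elim (fun hxy => Or.inr (e.injective hxy))
    fun hxy => Or.inl (e.map_rel_iff.1 ⟨h, hxy⟩)

theorem mem_sons_iff {x s : F.Node} : s ∈ F.Sons x ↔ ∃ n, e s = e x ++ [n] := by
  rw [← List.seqLT_covBy_iff, e.map_rel_iff]
  refine and_congr_right fun _ => not_congr ⟨?_, ?_⟩
  · rintro ⟨t, hxt, hts⟩
    exact ⟨e t, e.map_rel_iff.2 hxt, e.map_rel_iff.2 hts⟩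
  · rintro ⟨c, hxc, hcs⟩
    exact ⟨e.symm c, e.map_rel_iff.1 (by simpa using hxc), e.map_rel_iff.1 (by simpa using hcs)⟩

theorem not_isMaxNode (e : F.lt ≃r seqLT) (x : F.Node) : ¬ F.IsMaxNode x := fun h =>
  h ⟨e.symm (e x ++ [0]), e.map_rel_iff.1 (by simpa using List.seqLT_append_singleton (e x) 0)⟩

theorem append_singleton_mem_sons (l : List ℕ) (n : ℕ) :
    e.symm (l ++ [n]) ∈ F.Sons (e.symm l) :=
  (mem_sons_iff e).2 ⟨n, by simp⟩

theorem leaf_eq_iUnion_append (hls : F.LocallyStrict) (l : List ℕ) :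
    F.leaf (e.symm l) = ⋃ n, F.leaf (e.symm (l ++ [n])) := by
  rw [(hls _ (not_isMaxNode e _)).1]
  refine subset_antisymm (iUnion₂_subset fun s hs => ?_)
    (iUnion_subset fun n => subset_biUnion_of_mem (u := F.leaf) (append_singleton_mem_sons e l n))
  obtain ⟨n, hn⟩ := (mem_sons_iff e).1 hs
  rw [RelIso.apply_symm_apply] at hn
  obtain rfl : s = e.symm (l ++ [n]) := by rw [← hn, RelIso.symm_apply_apply]
  exact subset_iUnion (fun n => F.leaf (e.symm (l ++ [n]))) n

theorem disjoint_leaf_append (hls : F.LocallyStrict) (l : List ℕ) {m n : ℕ} (h : m ≠ n) :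
    Disjoint (F.leaf (e.symm (l ++ [m]))) (F.leaf (e.symm (l ++ [n]))) :=
  (hls _ (not_isMaxNode e _)).2 _ (append_singleton_mem_sons e l m) _
    (append_singleton_mem_sons e l n) (by simpa using h)

theorem leaf_append_subset (hls : F.LocallyStrict) (l : List ℕ) (n : ℕ) :
    F.leaf (e.symm (l ++ [n])) ⊆ F.leaf (e.symm l) :=
  (leaf_eq_iUnion_append e hls l).symm ▸ subset_iUnion (fun n => F.leaf (e.symm (l ++ [n]))) n

theorem leaf_anti_of_prefix (hls : F.LocallyStrict) {a b : List ℕ} (h : a <+: b) :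
    F.leaf (e.symm b) ⊆ F.leaf (e.symm a) := by
  induction b using List.reverseRecOn with
  | nil => rw [List.prefix_nil.1 h]
  | append_singleton b n ih =>
    rcases List.prefix_concat_iff.1 h with rfl | h
    · exact subset_rfl
    · exact (leaf_append_subset e hls b n).trans (ih h)

theorem prefix_of_mem_leaf (hls : F.LocallyStrict) {p : X} {a b : List ℕ}
    (ha : p ∈ F.leaf (e.symm a)) (hb : p ∈ F.leaf (e.symm b)) (hab : a.length ≤ b.length) :
    a <+: b := by
  induction a using List.reverseRecOn with
  | nil => exact List.nil_prefix
  | append_singleton a x ih =>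
    have hlt : a.length < b.length := by
      simp only [List.length_append, List.length_singleton] at hab; omega
    have hpre := ih (leaf_append_subset e hls a x ha) hlt.le
    have htake : b.take (a.length + 1) = a ++ [b[a.length]] := by
      rw [← List.take_concat_get' b a.length hlt, ← List.prefix_iff_eq_take.1 hpre]
    have hb' := leaf_anti_of_prefix e hls (List.take_prefix (a.length + 1) b) hb
    rw [htake] at hb'
    obtain rfl : x = b[a.length] := by
      by_contra hx
      exact disjoint_left.1 (disjoint_leaf_append e hls a hx) ha hb'
    exact htake ▸ List.take_prefix _ _

theorem isClosed_leaf [TopologicalSpace X] (ho : F.OpenIn) (hls : F.LocallyStrict)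
    (hnil : F.leaf (e.symm []) = univ) (l : List ℕ) : IsClosed (F.leaf (e.symm l)) := by
  induction l using List.reverseRecOn with
  | nil => rw [hnil]; exact isClosed_univ
  | append_singleton l a ih =>
    have hcompl : (F.leaf (e.symm (l ++ [a])))ᶜ =
        (F.leaf (e.symm l))ᶜ ∪ ⋃ (m : ℕ) (_ : m ≠ a), F.leaf (e.symm (l ++ [m])) := by
      ext p
      by_cases hpl : p ∈ F.leaf (e.symm l)
      · obtain ⟨m, hm⟩ := mem_iUnion.1 (leaf_eq_iUnion_append e hls l ▸ hpl)
        simp only [mem_compl_iff, mem_union, mem_iUnion, hpl, not_true, false_or]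
        refine ⟨fun hp => ⟨m, fun hma => hp (hma ▸ hm), hm⟩, ?_⟩
        rintro ⟨n, hna, hn⟩
        exact disjoint_left.1 (disjoint_leaf_append e hls l hna) hn
      · simp only [mem_compl_iff, mem_union, hpl, not_false_eq_true, true_or, iff_true]
        exact fun hp => hpl (leaf_append_subset e hls l a hp)
    rw [← isOpen_compl_iff, hcompl]
    exact ih.isOpen_compl.union (isOpen_biUnion fun m _ => ho _)

theorem exists_length_eq_mem_leaf (hls : F.LocallyStrict) (hnil : F.leaf (e.symm []) = univ)
    (p : X) (n : ℕ) : ∃ l : List ℕ, l.length = n ∧ p ∈ F.leaf (e.symm l) := by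
  induction n with
  | zero => exact ⟨[], rfl, hnil ▸ mem_univ p⟩
  | succ n ih =>
    obtain ⟨l, rfl, hl⟩ := ih
    obtain ⟨m, hm⟩ := mem_iUnion.1 (leaf_eq_iUnion_append e hls l ▸ hl)
    exact ⟨l ++ [m], by simp, hm⟩

theorem isChainN_scope (e : F.lt ≃r seqLT) (hls : F.LocallyStrict) (p : X) :
    F.IsChainN (F.scope p) := by
  intro x hx y hy
  replace hx : p ∈ F.leaf (e.symm (e x)) := by simpa [scope] using hx
  replace hy : p ∈ F.leaf (e.symm (e y)) := by simpa [scope] using hy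
  rcases le_total (e x).length (e y).length with hxy | hyx
  · rcases lt_or_eq_of_prefix e (prefix_of_mem_leaf e hls hx hy hxy) with h | h
    exacts [Or.inl h, Or.inr (Or.inl h)]
  · rcases lt_or_eq_of_prefix e (prefix_of_mem_leaf e hls hy hx hyx) with h | h
    exacts [Or.inr (Or.inr h), Or.inr (Or.inl h.symm)]

theorem scope_isBranch (hls : F.LocallyStrict) (hnil : F.leaf (e.symm []) = univ) (p : X) :
    F.IsBranch (F.scope p) := by
  refine ⟨isChainN_scope e hls p, fun C hC hpC => subset_antisymm hpC fun c hc => ?_⟩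
  obtain ⟨l, hlen, hpl⟩ := exists_length_eq_mem_leaf e hls hnil p (e c).length
  have length_ne {x y : F.Node} (h : F.lt x y) : (e x).length ≠ (e y).length :=
    (List.seqLT_length_lt (e.map_rel_iff.2 h)).ne
  rcases hC c hc (e.symm l) (hpC hpl) with h | rfl | h
  · exact absurd (by simp [hlen]) (length_ne h)
  · exact hpl
  · exact absurd (by simp [hlen]) (length_ne h)

end OmegaOmega

end FoliageTree

/-- Lemma `lem.pi.base.pseudo.base` of the paper: the leaves of a π-tree form
a countable π-base of clopen sets, and the leaves containing a point
intersect exactly in that point. -/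
theorem piTree_leaves_countable_piBase_clopen
    {X : Type u} [TopologicalSpace X] (F : FoliageTree X) (hF : F.IsPiTree) :
    Set.Countable {S : Set X | ∃ v, S = F.leaf v} ∧
      (∀ v, (F.leaf v).Nonempty ∧ IsOpen (F.leaf v)) ∧
      (∀ U : Set X, IsOpen U → U.Nonempty → ∃ v, F.leaf v ⊆ U) ∧
      (∀ v, IsClosed (F.leaf v) ∧ IsOpen (F.leaf v)) ∧
      ∀ p : X, (⋂ v ∈ F.scope p, F.leaf v) = {p} := by
  obtain ⟨⟨ho, hls, ⟨e⟩, hsb, r, hr, hru⟩, hgrow⟩ := hF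
  have : Countable F.Node := Countable.of_equiv (List ℕ) e.toEquiv.symm
  have hnil : F.leaf (e.symm []) = univ := FoliageTree.eq_symm_nil_of_isRoot e hr ▸ hru
  refine ⟨(countable_range F.leaf).mono (by rintro _ ⟨v, rfl⟩; exact ⟨v, rfl⟩),
    fun v => ⟨FoliageTree.leaf_nonempty hsb v, ho v⟩,
    fun U => FoliageTree.exists_leaf_subset hgrow, fun v => ⟨?_, ho v⟩,
    fun p => FoliageTree.iInter_scope_eq_singleton hsb (FoliageTree.scope_isBranch e hls hnil p)⟩
  simpa using FoliageTree.isClosed_leaf e ho hls hnil (e v)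
end
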